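/- Let the additive group ℝ act continuously on a compact metric space X, and let T > 0. Then the mean dimension of X with respect to the discrete subgroup TZ = {Tn : n ∈ ℤ} satisfies dim(X : TZ) = T · dim(X : ℝ). -/
import Mathlib

open Metric Filter Set
open scoped ENNReal

noncomputable section

/-- The diameter of a set with respect to an abstract distance function `d`. -/
def setDiam {X : Type*} (d : X → X → ℝ) (s : Set X) : ℝ :=
  sSup (insert 0 {r : ℝ | ∃ x ∈ s, ∃ y ∈ s, d x y = r})

/-- `P ⊆ ℝ^m` is a (finite) polyhedron of dimension at most `n`: a finite union of
simplices (convex hulls of affinely independent finite sets) each with at most `n+1` vertices. -/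
def IsPolyhedronOfDim {m : ℕ} (n : ℕ) (P : Set (EuclideanSpace ℝ (Fin m))) : Prop :=
  ∃ S : Finset (Finset (EuclideanSpace ℝ (Fin m))),
    (∀ s ∈ S, AffineIndependent ℝ (fun v : {x // x ∈ s} => (v : EuclideanSpace ℝ (Fin m))) ∧
      s.card ≤ n + 1) ∧
    P = ⋃ s ∈ S, convexHull ℝ (s : Set (EuclideanSpace ℝ (Fin m)))

/-- `Widim_ε(X, d)`: the minimal integer `n ≥ 0` such that there exist an `n`-dimensional
polyhedron `P` and a continuous map `f : X → P` all of whose fibers have `d`-diameter `≤ ε`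
(an `ε`-embedding). -/
def widim (X : Type*) [TopologicalSpace X] (d : X → X → ℝ) (ε : ℝ) : ℕ :=
  sInf {n : ℕ | ∃ (m : ℕ) (P : Set (EuclideanSpace ℝ (Fin m))) (f : X → P),
    IsPolyhedronOfDim n P ∧ Continuous f ∧ ∀ y : P, setDiam d (f ⁻¹' {y}) ≤ ε}

/-- For a right action `act` of `Γ` on `X` and `Ω ⊆ Γ`, the distance
`d_Ω(x,y) = sup_{γ ∈ Ω} d(x·γ, y·γ)`. -/
def dOmega {X Γ : Type*} (d : X → X → ℝ) (act : X → Γ → X) (Ω : Set Γ) (x y : X) : ℝ :=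
  sSup ((fun γ => d (act x γ) (act y γ)) '' Ω)
/-- The mean dimension of a continuous `ℝ`-action, defined along the amenable sequence
`Ω_n = [0,n]` (with `|Ω_n| = n`, Lebesgue measure); the limit (which exists by the
Ornstein–Weiss lemma) is written as a `limsup`. -/
def meanDimR {X : Type*} [MetricSpace X] (act : X → ℝ → X) : ℝ≥0∞ :=
  ⨆ ε > (0 : ℝ), Filter.limsup
    (fun n : ℕ => (widim X (dOmega dist act (Set.Icc 0 (n : ℝ))) ε : ℝ≥0∞) / (n : ℝ≥0∞))
    Filter.atTop

/-- The mean dimension of the induced `Tℤ`-action, defined along the amenable sequence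
`Ω'_n = {0, T, 2T, …, (n-1)T}` (with `|Ω'_n| = n`, counting measure). -/
def meanDimTZ {X : Type*} [MetricSpace X] (act : X → ℝ → X) (T : ℝ) : ℝ≥0∞ :=
  ⨆ ε > (0 : ℝ), Filter.limsup
    (fun n : ℕ => (widim X (dOmega dist act {t : ℝ | ∃ k : ℕ, k < n ∧ t = (k : ℝ) * T}) ε : ℝ≥0∞)
      / (n : ℝ≥0∞))
    Filter.atTop

/-! ### Auxiliary lemmas -/

/-- the defining set of `widim`. -/
def WSet (X : Type*) [TopologicalSpace X] (d : X → X → ℝ) (ε : ℝ) : Set ℕ :=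
  {n : ℕ | ∃ (m : ℕ) (P : Set (EuclideanSpace ℝ (Fin m))) (f : X → P),
    IsPolyhedronOfDim n P ∧ Continuous f ∧ ∀ y : P, setDiam d (f ⁻¹' {y}) ≤ ε}

lemma widim_eq (X : Type*) [TopologicalSpace X] (d : X → X → ℝ) (ε : ℝ) :
    widim X d ε = sInf (WSet X d ε) := rfl

lemma setDiam_le {X : Type*} {d : X → X → ℝ} {s : Set X} {ε : ℝ} (hε : 0 ≤ ε)
    (h : ∀ x ∈ s, ∀ y ∈ s, d x y ≤ ε) : setDiam d s ≤ ε := by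
  apply Real.sSup_le _ hε
  rintro r (rfl | ⟨x, hx, y, hy, rfl⟩)
  · exact hε
  · exact h x hx y hy

lemma le_setDiam {X : Type*} {d : X → X → ℝ} {s : Set X} {C : ℝ}
    (hC : ∀ x y : X, d x y ≤ C) {x y : X} (hx : x ∈ s) (hy : y ∈ s) :
    d x y ≤ setDiam d s := by
  apply le_csSup
  · refine ⟨max C 0, ?_⟩
    rintro r (rfl | ⟨a, _, b, _, rfl⟩)
    · exact le_max_right _ _
    · exact le_trans (hC a b) (le_max_left _ _)
  · exact Or.inr ⟨x, hx, y, hy, rfl⟩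

lemma dOmega_le {X Γ : Type*} {d : X → X → ℝ} {act : X → Γ → X} {Ω : Set Γ} {x y : X} {ε : ℝ}
    (hε : 0 ≤ ε) (h : ∀ γ ∈ Ω, d (act x γ) (act y γ) ≤ ε) : dOmega d act Ω x y ≤ ε := by
  apply Real.sSup_le _ hε
  rintro r ⟨γ, hγ, rfl⟩
  exact h γ hγ

lemma le_dOmega {X Γ : Type*} {d : X → X → ℝ} {act : X → Γ → X} {Ω : Set Γ} {x y : X} {C : ℝ}
    (hC : ∀ a b : X, d a b ≤ C) {γ : Γ} (hγ : γ ∈ Ω) :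
    d (act x γ) (act y γ) ≤ dOmega d act Ω x y := by
  apply le_csSup
  · exact ⟨C, by rintro r ⟨γ', _, rfl⟩; exact hC _ _⟩
  · exact ⟨γ, hγ, rfl⟩

lemma dOmega_nonneg {X Γ : Type*} {d : X → X → ℝ} (hd : ∀ a b, 0 ≤ d a b)
    (act : X → Γ → X) (Ω : Set Γ) (x y : X) : 0 ≤ dOmega d act Ω x y := by
  apply Real.sSup_nonneg
  rintro r ⟨γ, _, rfl⟩; exact hd _ _

lemma dOmega_mono {X Γ : Type*} {d : X → X → ℝ} (hd : ∀ a b, 0 ≤ d a b) {C : ℝ}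
    (hC : ∀ a b : X, d a b ≤ C) {act : X → Γ → X} {Ω Ω' : Set Γ} (h : Ω ⊆ Ω') (x y : X) :
    dOmega d act Ω x y ≤ dOmega d act Ω' x y := by
  apply Real.sSup_le _ (dOmega_nonneg hd act Ω' x y)
  rintro r ⟨γ, hγ, rfl⟩
  exact le_dOmega hC (h hγ)

lemma dOmega_le_bound {X Γ : Type*} [MetricSpace X] {C : ℝ} (hC : ∀ a b : X, dist a b ≤ C)
    (act : X → Γ → X) (Ω : Set Γ) (x y : X) : dOmega dist act Ω x y ≤ max C 0 := by
  apply Real.sSup_le _ (le_max_right _ _)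
  rintro r ⟨γ, _, rfl⟩
  exact le_trans (hC _ _) (le_max_left _ _)

lemma widim_le_widim {X : Type*} [TopologicalSpace X] {d d' : X → X → ℝ} {ε ε' : ℝ}
    (hε : 0 ≤ ε) {C : ℝ} (hC : ∀ a b : X, d' a b ≤ C)
    (h : ∀ x y : X, d' x y ≤ ε' → d x y ≤ ε)
    (hne : (WSet X d' ε').Nonempty) :
    widim X d ε ≤ widim X d' ε' := by
  have hmem := Nat.sInf_mem hne
  obtain ⟨m, P, f, hP, hf, hfib⟩ := hmem
  rw [widim_eq]
  apply Nat.sInf_le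
  refine ⟨m, P, f, hP, hf, fun y => ?_⟩
  apply setDiam_le hε
  intro a ha b hb
  exact h a b (le_trans (le_setDiam hC ha hb) (hfib y))

lemma exists_dist_bound (X : Type*) [MetricSpace X] [CompactSpace X] :
    ∃ C : ℝ, ∀ x y : X, dist x y ≤ C := by
  obtain ⟨C, hC⟩ := Metric.isBounded_iff.mp (isCompact_univ (X := X)).isBounded
  exact ⟨C, fun x y => hC (mem_univ x) (mem_univ y)⟩

lemma unif_act {X : Type*} [MetricSpace X] [CompactSpace X]
    (act : X → ℝ → X) (hcont : Continuous fun p : X × ℝ => act p.1 p.2)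
    (a b : ℝ) {ε : ℝ} (hε : 0 < ε) :
    ∃ δ > 0, ∀ x y : X, dist x y < δ → ∀ t ∈ Icc a b, dist (act x t) (act y t) ≤ ε := by
  have hF : Continuous fun p : X × (Icc a b) => act p.1 (p.2 : ℝ) :=
    hcont.comp (continuous_fst.prodMk (continuous_subtype_val.comp continuous_snd))
  have hUC : UniformContinuous fun p : X × (Icc a b) => act p.1 (p.2 : ℝ) :=
    CompactSpace.uniformContinuous_of_continuous hF
  rw [Metric.uniformContinuous_iff] at hUC
  obtain ⟨δ, hδ, hd⟩ := hUC ε hε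
  refine ⟨δ, hδ, fun x y hxy t ht => ?_⟩
  have : dist ((x, ⟨t, ht⟩) : X × (Icc a b)) (y, ⟨t, ht⟩) < δ := by
    rw [Prod.dist_eq]
    have h2 : dist (⟨t, ht⟩ : Icc a b) ⟨t, ht⟩ = 0 := dist_self _
    rw [h2]
    simpa [max_eq_left dist_nonneg] using hxy
  exact le_of_lt (hd this)
/-- The nerve construction: membership in the widim set. -/
lemma exists_widim_mem {X : Type*} [MetricSpace X] [CompactSpace X] (d : X → X → ℝ)
    {ε δ : ℝ} (hδ : 0 < δ) (hε : 0 ≤ ε) (hd : ∀ x y : X, dist x y < δ → d x y ≤ ε) :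
    (WSet X d ε).Nonempty := by
  classical
  by_cases hX : IsEmpty X
  · -- empty space: map to a single point
    refine ⟨0, 0, {0}, fun x => (hX.elim x), ?_, ?_, ?_⟩
    · refine ⟨{{0}}, ?_, by simp⟩
      intro s hs
      rw [Finset.mem_singleton] at hs
      subst hs
      constructor
      · haveI : Subsingleton {x // x ∈ ({0} : Finset (EuclideanSpace ℝ (Fin 0)))} :=
          ⟨fun a b => Subtype.ext
            ((Finset.mem_singleton.mp a.2).trans (Finset.mem_singleton.mp b.2).symm)⟩
        exact affineIndependent_of_subsingleton ℝ _
      · simp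
    · refine continuous_def.mpr fun s _ => ?_
      have : (fun x : X => (hX.elim x : ({0} : Set (EuclideanSpace ℝ (Fin 0))))) ⁻¹' s = ∅ :=
        eq_empty_of_isEmpty _
      rw [this]; exact isOpen_empty
    · intro y
      apply setDiam_le hε
      intro x hx
      exact hX.elim x
  · -- main case: X nonempty
    rw [not_isEmpty_iff] at hX
    -- finite subcover by balls of radius δ/2
    have hcov : (univ : Set X) ⊆ ⋃ x : X, ball x (δ / 2) := by
      intro x _
      exact mem_iUnion.mpr ⟨x, mem_ball_self (by linarith)⟩
    obtain ⟨t, ht⟩ := isCompact_univ.elim_finite_subcover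
      (fun x : X => ball x (δ / 2)) (fun _ => isOpen_ball) hcov
    have htne : t.Nonempty := by
      obtain ⟨x⟩ := hX
      obtain ⟨i, hi, _⟩ := mem_iUnion₂.mp (ht (mem_univ x))
      exact ⟨i, hi⟩
    set m := t.card with hm
    have hm1 : 1 ≤ m := Finset.card_pos.mpr htne
    set e := t.equivFin with he
    set c : Fin m → X := fun i => (e.symm i : X) with hc
    set g : Fin m → X → ℝ := fun i x => max (δ / 2 - dist x (c i)) 0 with hg
    have hgc : ∀ i, Continuous (g i) := fun i =>
      (continuous_const.sub (continuous_id.dist continuous_const)).max continuous_const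
    have hg0 : ∀ i x, 0 ≤ g i x := fun i x => le_max_right _ _
    have hgpos : ∀ i x, 0 < g i x → dist x (c i) < δ / 2 := by
      intro i x hpos
      by_contra hcon
      push_neg at hcon
      have : g i x = 0 := max_eq_right (by linarith)
      rw [this] at hpos; exact lt_irrefl 0 hpos
    set Sf : X → ℝ := fun x => ∑ i, g i x with hSf
    have hSpos : ∀ x, 0 < Sf x := by
      intro x
      obtain ⟨i, hi, hxi⟩ := mem_iUnion₂.mp (ht (mem_univ x))
      refine Finset.sum_pos' (fun j _ => hg0 j x) ⟨e ⟨i, hi⟩, Finset.mem_univ _, ?_⟩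
      have hci : c (e ⟨i, hi⟩) = i := by simp [hc]
      simp only [hg]
      rw [hci]
      have : δ / 2 - dist x i > 0 := by
        rw [mem_ball] at hxi; linarith
      exact lt_max_of_lt_left this
    set φ : Fin m → X → ℝ := fun i x => g i x / Sf x with hφ
    have hφc : ∀ i, Continuous (φ i) := fun i =>
      (hgc i).div (by exact continuous_finset_sum _ fun j _ => hgc j)
        (fun x => ne_of_gt (hSpos x))
    have hφ0 : ∀ i x, 0 ≤ φ i x := fun i x => div_nonneg (hg0 i x) (le_of_lt (hSpos x))
    have hφ1 : ∀ x, ∑ i, φ i x = 1 := by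
      intro x
      rw [← Finset.sum_div]
      exact div_self (ne_of_gt (hSpos x))
    have hφpos : ∀ i x, 0 < φ i x → dist x (c i) < δ / 2 := by
      intro i x hpos
      apply hgpos
      by_contra hcon
      push_neg at hcon
      have : g i x = 0 := le_antisymm hcon (hg0 i x)
      rw [hφ, ] at hpos
      simp only [this] at hpos
      rw [zero_div] at hpos
      exact lt_irrefl 0 hpos
    -- coordinate evaluation of sums
    have sum_apply : ∀ (s : Finset (Fin m)) (f : Fin m → EuclideanSpace ℝ (Fin m)) (i : Fin m),
        (∑ j ∈ s, f j) i = ∑ j ∈ s, f j i := by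
      intro s f i
      have := map_sum (EuclideanSpace.proj (𝕜 := ℝ) i) f s
      rw [show (EuclideanSpace.proj (𝕜 := ℝ) i) (∑ j ∈ s, f j) = (∑ j ∈ s, f j) i from rfl]
        at this
      rw [this]; rfl
    -- the vertices
    set v : Fin m → EuclideanSpace ℝ (Fin m) := fun i => EuclideanSpace.single i (1 : ℝ) with hv
    have hvapp : ∀ i j, v j i = if i = j then (1:ℝ) else 0 := by
      intro i j
      simp [hv, EuclideanSpace.single_apply]
    have hvinj : Function.Injective v := by
      intro i j hij
      by_contra hne
      have h1 : v i i = 1 := by rw [hvapp]; simp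
      have h2 : v j i = 0 := by rw [hvapp]; simp [hne]
      rw [hij, h2] at h1
      exact one_ne_zero h1.symm
    have hvAI : AffineIndependent ℝ v := by
      rw [affineIndependent_iff]
      intro s w hw hsum i hi
      have hval : (∑ j ∈ s, w j • v j) i = w i := by
        rw [sum_apply]
        rw [Finset.sum_eq_single i]
        · rw [show (w i • v i) i = w i * v i i from rfl, hvapp]; simp
        · intro j hj hji
          rw [show (w j • v j) i = w j * v j i from rfl, hvapp]; simp [Ne.symm hji]
        · intro h; exact absurd hi h
      rw [hsum] at hval
      rw [← hval]; rfl
    -- the simplex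
    set sx : Finset (EuclideanSpace ℝ (Fin m)) := Finset.univ.image v with hsx
    have hcard : sx.card = m := by
      rw [hsx, Finset.card_image_of_injective _ hvinj, Finset.card_univ, Fintype.card_fin]
    set P : Set (EuclideanSpace ℝ (Fin m)) := convexHull ℝ (sx : Set _) with hP
    have hPoly : IsPolyhedronOfDim (m - 1) P := by
      refine ⟨{sx}, ?_, by simp [hP]⟩
      intro s hs
      rw [Finset.mem_singleton] at hs
      subst hs
      constructor
      · -- affine independence of the subtype family
        have hAI := hvAI.range
        have hset : (↑sx : Set (EuclideanSpace ℝ (Fin m))) = Set.range v := by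
          rw [hsx]; simp
        let emb : {x // x ∈ sx} ↪ Set.range v :=
          ⟨fun x => ⟨(x : EuclideanSpace ℝ (Fin m)), hset ▸ x.2⟩,
            fun a b hab => Subtype.ext (Subtype.mk_eq_mk.mp hab)⟩
        exact hAI.comp_embedding emb
      · rw [hcard]
        omega
    -- the map
    set f0 : X → EuclideanSpace ℝ (Fin m) := fun x => ∑ i, φ i x • v i with hf0
    have hf0c : Continuous f0 := by
      apply continuous_finset_sum
      intro i _
      exact (hφc i).smul continuous_const
    have hf0app : ∀ x i, f0 x i = φ i x := by
      intro x i
      rw [hf0]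
      show (∑ j, φ j x • v j) i = φ i x
      rw [sum_apply]
      rw [Finset.sum_eq_single i]
      · rw [show (φ i x • v i) i = φ i x * v i i from rfl, hvapp]; simp
      · intro j _ hji
        rw [show (φ j x • v j) i = φ j x * v j i from rfl, hvapp]; simp [Ne.symm hji]
      · intro h; exact absurd (Finset.mem_univ i) h
    have hmem : ∀ x, f0 x ∈ P := by
      intro x
      rw [hP]
      have := Finset.centerMass_mem_convexHull (s := (↑sx : Set (EuclideanSpace ℝ (Fin m))))
        (t := (Finset.univ : Finset (Fin m)))
        (w := fun i => φ i x) (fun i _ => hφ0 i x) (by rw [hφ1 x]; norm_num)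
        (z := v) (fun i _ => Finset.mem_coe.mpr
          (by rw [hsx]; exact Finset.mem_image_of_mem v (Finset.mem_univ i)))
      rwa [Finset.centerMass_eq_of_sum_1 _ _ (hφ1 x)] at this
    set f : X → P := fun x => ⟨f0 x, hmem x⟩ with hf
    refine ⟨m - 1, m, P, f, hPoly, ?_, ?_⟩
    · exact hf0c.subtype_mk _
    · intro y
      apply setDiam_le hε
      intro a ha b hb
      simp only [mem_preimage, mem_singleton_iff, hf] at ha hb
      have hab : f0 a = f0 b := by
        have := congrArg Subtype.val (ha.trans hb.symm)
        exact this
      -- find a coordinate where φ is positive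
      have hex : ∃ i, 0 < φ i a := by
        by_contra hcon
        push_neg at hcon
        have : ∑ i, φ i a ≤ 0 := Finset.sum_nonpos fun i _ => hcon i
        rw [hφ1 a] at this
        linarith
      obtain ⟨i, hia⟩ := hex
      have hib : 0 < φ i b := by
        have : φ i a = φ i b := by rw [← hf0app a i, ← hf0app b i, hab]
        rwa [this] at hia
      have da : dist a (c i) < δ / 2 := hφpos i a hia
      have db : dist b (c i) < δ / 2 := hφpos i b hib
      have : dist a b < δ := by
        calc dist a b ≤ dist a (c i) + dist (c i) b := dist_triangle _ _ _
        _ = dist a (c i) + dist b (c i) := by rw [dist_comm (c i) b]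
        _ < δ := by linarith
      exact hd a b this
lemma limsup_comp_le (a b : ℕ → ℕ) (g : ℕ → ℕ) {c : ℝ} (hc : 0 < c)
    (hab : ∀ᶠ n in atTop, a n ≤ b (g n))
    (hgb : ∀ᶠ n in atTop, (g n : ℝ) ≤ c * n + 1)
    (hgtop : Tendsto g atTop atTop) :
    limsup (fun n : ℕ => (a n : ℝ≥0∞) / n) atTop ≤
      ENNReal.ofReal c * limsup (fun m : ℕ => (b m : ℝ≥0∞) / m) atTop := by
  set L := limsup (fun m : ℕ => (b m : ℝ≥0∞) / m) atTop with hL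
  by_cases hLtop : L = ⊤
  · rw [hLtop, ENNReal.mul_top (ENNReal.ofReal_pos.mpr hc).ne']
    exact le_top
  have key : ∀ δ : ℝ≥0∞, 0 < δ →
      limsup (fun n : ℕ => (a n : ℝ≥0∞) / n) atTop ≤ (L + δ) * (ENNReal.ofReal c + δ) := by
    intro δ hδ
    by_cases hδt : δ = ⊤
    · have h : (L + δ) * (ENNReal.ofReal c + δ) = ⊤ := by simp [hδt]
      rw [h]; exact le_top
    have hLδ : L < L + δ := ENNReal.lt_add_right hLtop hδ.ne'
    have hev : ∀ᶠ m in atTop, (b m : ℝ≥0∞) / m < L + δ := eventually_lt_of_limsup_lt hLδ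
    have hev2 : ∀ᶠ n in atTop, (b (g n) : ℝ≥0∞) / (g n) < L + δ := hgtop.eventually hev
    have hg1 : ∀ᶠ n in atTop, 1 ≤ g n := hgtop.eventually (eventually_ge_atTop 1)
    set r := δ.toReal with hr
    have hrpos : 0 < r := ENNReal.toReal_pos hδ.ne' hδt
    have hev3 : ∀ᶠ n : ℕ in atTop, (1 : ℝ) ≤ r * n := by
      have h1 : Tendsto (fun n : ℕ => r * n) atTop atTop :=
        (tendsto_natCast_atTop_atTop (R := ℝ)).const_mul_atTop hrpos
      exact h1.eventually_ge_atTop 1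
    refine limsup_le_of_le (by isBoundedDefault) ?_
    filter_upwards [hab, hgb, hev2, hg1, hev3] with n h1 h2 h3 h4 h5
    have hgn0 : (g n : ℝ≥0∞) ≠ 0 := by
      have : g n ≠ 0 := by omega
      exact_mod_cast this
    have hb1 : (b (g n) : ℝ≥0∞) ≤ (L + δ) * (g n) :=
      (ENNReal.div_le_iff_le_mul (Or.inl hgn0) (Or.inl (ENNReal.natCast_ne_top _))).mp h3.le
    have hgn : (g n : ℝ≥0∞) ≤ (ENNReal.ofReal c + δ) * n := by
      have hreal : (g n : ℝ) ≤ (c + r) * n := by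
        have : (1 : ℝ) ≤ r * n := h5
        nlinarith [h2]
      calc (g n : ℝ≥0∞) = ENNReal.ofReal (g n : ℝ) := (ENNReal.ofReal_natCast _).symm
        _ ≤ ENNReal.ofReal ((c + r) * n) := ENNReal.ofReal_le_ofReal hreal
        _ = (ENNReal.ofReal c + ENNReal.ofReal r) * ENNReal.ofReal (n : ℝ) := by
            rw [ENNReal.ofReal_mul (by positivity), ENNReal.ofReal_add hc.le hrpos.le]
        _ = (ENNReal.ofReal c + δ) * n := by
            rw [hr, ENNReal.ofReal_toReal hδt, ENNReal.ofReal_natCast]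
    have hn0 : (n : ℝ≥0∞) ≠ 0 := by
      have : n ≠ 0 := by
        rintro rfl
        simp at h5
        linarith
      exact_mod_cast this
    calc (a n : ℝ≥0∞) / n ≤ (b (g n) : ℝ≥0∞) / n :=
          ENNReal.div_le_div_right (by exact_mod_cast h1) _
      _ ≤ ((L + δ) * ((ENNReal.ofReal c + δ) * n)) / n :=
          ENNReal.div_le_div_right (hb1.trans (mul_le_mul_right hgn _)) _
      _ = ((L + δ) * (ENNReal.ofReal c + δ)) * n / n := by rw [mul_assoc]
      _ = (L + δ) * (ENNReal.ofReal c + δ) := by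
          rw [mul_div_assoc, ENNReal.div_self hn0 (ENNReal.natCast_ne_top n), mul_one]
  have htends : Tendsto (fun δ : ℝ≥0∞ => (L + δ) * (ENNReal.ofReal c + δ)) (nhdsWithin 0 (Set.Ioi 0))
      (nhds (L * ENNReal.ofReal c)) := by
    have h1 : Tendsto (fun δ : ℝ≥0∞ => L + δ) (nhdsWithin 0 (Set.Ioi 0)) (nhds L) := by
      have h : Tendsto (fun δ : ℝ≥0∞ => L + δ) (nhds 0) (nhds (L + 0)) :=
        tendsto_const_nhds.add tendsto_id
      simpa using h.mono_left nhdsWithin_le_nhds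
    have h2 : Tendsto (fun δ : ℝ≥0∞ => ENNReal.ofReal c + δ) (nhdsWithin 0 (Set.Ioi 0))
        (nhds (ENNReal.ofReal c)) := by
      have h : Tendsto (fun δ : ℝ≥0∞ => ENNReal.ofReal c + δ) (nhds 0)
          (nhds (ENNReal.ofReal c + 0)) := tendsto_const_nhds.add tendsto_id
      simpa using h.mono_left nhdsWithin_le_nhds
    exact ENNReal.Tendsto.mul h1 (Or.inr ENNReal.ofReal_ne_top) h2 (Or.inr hLtop)
  have hfin : limsup (fun n : ℕ => (a n : ℝ≥0∞) / n) atTop ≤ L * ENNReal.ofReal c := by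
    apply ge_of_tendsto htends
    filter_upwards [self_mem_nhdsWithin] with δ hδ using key δ hδ
  rwa [mul_comm] at hfin

section Main

variable {X : Type*} [MetricSpace X] [CompactSpace X]

lemma compA (act : X → ℝ → X)
    (hcont : Continuous fun p : X × ℝ => act p.1 p.2)
    {T : ℝ} (hT : 0 < T) {ε : ℝ} (hε : 0 < ε) :
    limsup (fun n : ℕ =>
        (widim X (dOmega dist act {t : ℝ | ∃ k : ℕ, k < n ∧ t = (k : ℝ) * T}) ε : ℝ≥0∞)
          / (n : ℝ≥0∞)) atTop
      ≤ ENNReal.ofReal T *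
        limsup (fun n : ℕ =>
          (widim X (dOmega dist act (Icc 0 (n : ℝ))) ε : ℝ≥0∞) / (n : ℝ≥0∞)) atTop := by
  obtain ⟨C, hC⟩ := exists_dist_bound X
  set g1 : ℕ → ℕ := fun n => ⌈(n : ℝ) * T⌉₊ with hg1
  apply limsup_comp_le _ _ g1 hT
  · apply Eventually.of_forall
    intro n
    apply widim_le_widim hε.le (dOmega_le_bound hC act _)
    · intro x y hxy
      refine le_trans (dOmega_mono (fun a b => dist_nonneg) hC ?_ x y) hxy
      rintro t ⟨k, hk, rfl⟩
      constructor
      · positivity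
      · calc (k : ℝ) * T ≤ (n : ℝ) * T := by
              apply mul_le_mul_of_nonneg_right _ hT.le
              exact_mod_cast hk.le
          _ ≤ ((g1 n : ℕ) : ℝ) := Nat.le_ceil _
    · obtain ⟨δ, hδ, hu⟩ := unif_act act hcont 0 ((g1 n : ℕ) : ℝ) hε
      exact exists_widim_mem _ hδ hε.le
        (fun x y hxy => dOmega_le hε.le (fun t ht => hu x y hxy t ht))
  · apply Eventually.of_forall
    intro n
    have h := Nat.ceil_lt_add_one (a := (n : ℝ) * T) (by positivity)
    have : ((g1 n : ℕ) : ℝ) < (n : ℝ) * T + 1 := h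
    nlinarith [this]
  · have h0 : Tendsto (fun n : ℕ => (n : ℝ) * T) atTop atTop :=
      tendsto_natCast_atTop_atTop.atTop_mul_const hT
    have h1 : Tendsto (fun n : ℕ => ⌊(n : ℝ) * T⌋₊) atTop atTop :=
      tendsto_nat_floor_atTop.comp h0
    exact tendsto_atTop_mono (fun n => Nat.floor_le_ceil _) h1

lemma compB (act : X → ℝ → X) (h0 : ∀ x, act x 0 = x)
    (hadd : ∀ x s t, act (act x s) t = act x (s + t))
    (hcont : Continuous fun p : X × ℝ => act p.1 p.2)
    {T : ℝ} (hT : 0 < T) {ε : ℝ} (hε : 0 < ε) :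
    ∃ ε' > (0 : ℝ),
      limsup (fun n : ℕ =>
          (widim X (dOmega dist act (Icc 0 (n : ℝ))) ε : ℝ≥0∞) / (n : ℝ≥0∞)) atTop
        ≤ ENNReal.ofReal T⁻¹ *
          limsup (fun n : ℕ =>
            (widim X (dOmega dist act {t : ℝ | ∃ k : ℕ, k < n ∧ t = (k : ℝ) * T}) ε' : ℝ≥0∞)
              / (n : ℝ≥0∞)) atTop := by
  obtain ⟨C, hC⟩ := exists_dist_bound X
  obtain ⟨δ, hδ, hu⟩ := unif_act act hcont 0 T hε
  refine ⟨δ / 2, by linarith, ?_⟩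
  set g2 : ℕ → ℕ := fun n => ⌊(n : ℝ) / T⌋₊ + 1 with hg2
  apply limsup_comp_le _ _ g2 (inv_pos.mpr hT)
  · apply Eventually.of_forall
    intro n
    apply widim_le_widim hε.le (dOmega_le_bound hC act _)
    · intro x y hxy
      apply dOmega_le hε.le
      intro t ht
      obtain ⟨ht0, htn⟩ := ht
      set k : ℕ := ⌊t / T⌋₊ with hk
      have hkt : (k : ℝ) * T ≤ t := by
        rw [← le_div_iff₀ hT]
        exact Nat.floor_le (by positivity)
      have htk : t < ((k : ℝ) + 1) * T := by
        rw [← div_lt_iff₀ hT]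
        exact_mod_cast Nat.lt_floor_add_one (t / T)
      have hkm : k < g2 n := by
        have h' : k ≤ ⌊(n : ℝ) / T⌋₊ := Nat.floor_mono (by gcongr)
        exact Nat.lt_succ_of_le h'
      have hdk : dist (act x ((k : ℝ) * T)) (act y ((k : ℝ) * T)) < δ := by
        have := le_dOmega (d := dist) (act := act)
          (Ω := {t : ℝ | ∃ j : ℕ, j < g2 n ∧ t = (j : ℝ) * T}) (x := x) (y := y)
          hC ⟨k, hkm, rfl⟩
        calc dist (act x ((k : ℝ) * T)) (act y ((k : ℝ) * T))
            ≤ dOmega dist act {t : ℝ | ∃ j : ℕ, j < g2 n ∧ t = (j : ℝ) * T} x y := this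
          _ ≤ δ / 2 := hxy
          _ < δ := by linarith
      have hr : t - (k : ℝ) * T ∈ Icc (0 : ℝ) T := by
        constructor <;> nlinarith
      have := hu _ _ hdk (t - (k : ℝ) * T) hr
      rwa [hadd, hadd, show (k : ℝ) * T + (t - (k : ℝ) * T) = t by ring] at this
    · obtain ⟨δ₂, hδ₂, hu₂⟩ := unif_act act hcont 0 (((g2 n : ℕ) : ℝ) * T)
        (show (0:ℝ) < δ / 2 by linarith)
      apply exists_widim_mem _ hδ₂ (by linarith : (0:ℝ) ≤ δ / 2)
      intro x y hxy
      apply dOmega_le (by linarith : (0:ℝ) ≤ δ / 2)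
      rintro t ⟨j, hj, rfl⟩
      apply hu₂ x y hxy
      constructor
      · positivity
      · apply mul_le_mul_of_nonneg_right _ hT.le
        exact_mod_cast hj.le
  · apply Eventually.of_forall
    intro n
    have h := Nat.floor_le (a := (n : ℝ) / T) (by positivity)
    have : ((g2 n : ℕ) : ℝ) ≤ (n : ℝ) / T + 1 := by
      rw [hg2]
      push_cast
      linarith
    calc ((g2 n : ℕ) : ℝ) ≤ (n : ℝ) / T + 1 := this
      _ = T⁻¹ * (n : ℝ) + 1 := by ring
  · have h0 : Tendsto (fun n : ℕ => (n : ℝ) / T) atTop atTop :=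
      tendsto_natCast_atTop_atTop.atTop_div_const hT
    have h1 : Tendsto (fun n : ℕ => ⌊(n : ℝ) / T⌋₊) atTop atTop :=
      tendsto_nat_floor_atTop.comp h0
    exact tendsto_atTop_mono (fun n => Nat.le_succ _) h1

end Main

/-- For a continuous `ℝ`-action on a compact metric space, `dim(X : Tℤ) = T · dim(X : ℝ)`. -/
theorem stmt5 {X : Type*} [MetricSpace X] [CompactSpace X]
    (act : X → ℝ → X) (h0 : ∀ x, act x 0 = x)
    (hadd : ∀ x s t, act (act x s) t = act x (s + t))
    (hcont : Continuous fun p : X × ℝ => act p.1 p.2)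
    (T : ℝ) (hT : 0 < T) :
    meanDimTZ act T = ENNReal.ofReal T * meanDimR act := by
  simp only [meanDimTZ, meanDimR]
  apply le_antisymm
  · apply iSup₂_le
    intro ε hε
    refine le_trans (compA act hcont hT hε) ?_
    apply mul_le_mul_right
    exact le_iSup₂ (f := fun ε (_ : ε > (0:ℝ)) => Filter.limsup
      (fun n : ℕ => (widim X (dOmega dist act (Set.Icc 0 (n : ℝ))) ε : ℝ≥0∞) / (n : ℝ≥0∞))
      Filter.atTop) ε hε
  · rw [ENNReal.mul_iSup]
    apply iSup_le
    intro ε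
    rw [ENNReal.mul_iSup]
    apply iSup_le
    intro hε
    obtain ⟨ε', hε', hB⟩ := compB act h0 hadd hcont hT hε
    set M := Filter.limsup
      (fun n : ℕ => (widim X (dOmega dist act {t : ℝ | ∃ k : ℕ, k < n ∧ t = (k : ℝ) * T}) ε' : ℝ≥0∞)
        / (n : ℝ≥0∞)) Filter.atTop with hM
    calc ENNReal.ofReal T * Filter.limsup
          (fun n : ℕ => (widim X (dOmega dist act (Set.Icc 0 (n : ℝ))) ε : ℝ≥0∞) / (n : ℝ≥0∞))
          Filter.atTop
        ≤ ENNReal.ofReal T * (ENNReal.ofReal T⁻¹ * M) := mul_le_mul_right hB _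
      _ = (ENNReal.ofReal T * ENNReal.ofReal T⁻¹) * M := (mul_assoc _ _ _).symm
      _ = 1 * M := by
          rw [← ENNReal.ofReal_mul hT.le, mul_inv_cancel₀ hT.ne', ENNReal.ofReal_one]
      _ = M := one_mul _
      _ ≤ _ := le_iSup₂ (f := fun ε (_ : ε > (0:ℝ)) => Filter.limsup
          (fun n : ℕ =>
            (widim X (dOmega dist act {t : ℝ | ∃ k : ℕ, k < n ∧ t = (k : ℝ) * T}) ε : ℝ≥0∞)
              / (n : ℝ≥0∞)) Filter.atTop) ε' hε'
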